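/- Let G be a group and M a submonoid of G such that M generates G and any two elements of M admit a right lcm in M. Let z ∈ G satisfy z^p = 1 for some positive integer p, and write z = x₁ * y₁⁻¹ with x₁, y₁ in M (possible since G is a group of right fractions of M). Choose inductively x₂, y₂, x₃, y₃, … in M with xᵢ * y_{i+1} = yᵢ * x_{i+1} a right lcm of xᵢ and yᵢ for each i. Then y_{p+1} is an invertible element of M, the element t = x_{p+1} * y_{p+1}⁻¹ belongs to M, satisfies t^p = 1, and z = x * t * x⁻¹ where x = x₁ ⋯ x_p ∈ M. -/
import Mathlib


/-- `z` is a right lcm of `x` and `y` within the submonoid `M` of the group `G`. -/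
def IsRightLcmIn {G : Type*} [Group G] (M : Submonoid G) (x y z : G) : Prop :=
  z ∈ M ∧ (∃ a ∈ M, z = x * a) ∧ (∃ b ∈ M, z = y * b) ∧
    ∀ w ∈ M, (∃ a ∈ M, w = x * a) → (∃ b ∈ M, w = y * b) → ∃ c ∈ M, w = z * c

/-- `seqProd x a k` is the product `x (a+1) * x (a+2) * ⋯ * x (a+k)`. -/
def seqProd {G : Type*} [Group G] (x : ℕ → G) (a k : ℕ) : G :=
  ((List.range k).map (fun i => x (a + 1 + i))).prod

section Aux

variable {G : Type*} [Group G]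

lemma seqProd_zero (x : ℕ → G) (a : ℕ) : seqProd x a 0 = 1 := rfl

lemma seqProd_succ (x : ℕ → G) (a k : ℕ) :
    seqProd x a (k+1) = seqProd x a k * x (a+1+k) := by
  unfold seqProd
  rw [List.range_succ, List.map_append, List.prod_append]
  simp

lemma seqProd_front (x : ℕ → G) (a k : ℕ) :
    seqProd x a (k+1) = x (a+1) * seqProd x (a+1) k := by
  unfold seqProd
  rw [List.range_succ_eq_map]
  have hf : ((fun i => x (a+1+i)) ∘ Nat.succ) = fun i => x (a+1+1+i) := by
    funext i
    simp only [Function.comp]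
    congr 1
    omega
  simp only [List.map_cons, List.prod_cons, List.map_map, Nat.add_zero, hf]

lemma seqProd_mem {M : Submonoid G} (x : ℕ → G) (hx : ∀ i, 1 ≤ i → x i ∈ M)
    (a k : ℕ) : seqProd x a k ∈ M := by
  induction k with
  | zero => exact M.one_mem
  | succ k ih =>
    rw [seqProd_succ]
    exact M.mul_mem ih (hx _ (by omega))

lemma conj_pow_aux (a b : G) (n : ℕ) : (a * b * a⁻¹) ^ n = a * b ^ n * a⁻¹ := by
  induction n with
  | zero => simp
  | succ n ih =>
    rw [pow_succ, pow_succ, ih]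
    group

end Aux

/-- If `z ^ p = 1` with `p > 0`, `z = x₁ * y₁⁻¹`, and `xᵢ * y_{i+1} = yᵢ * x_{i+1}` is a
right lcm of `xᵢ` and `yᵢ` for every `i ≥ 1`, then `y_{p+1}` is invertible in `M`,
`t = x_{p+1} * y_{p+1}⁻¹` lies in `M`, satisfies `t ^ p = 1`, and `z = x * t * x⁻¹`
where `x = x₁ ⋯ x_p ∈ M`. -/
theorem torsion_conjugate_into_monoid {G : Type*} [Group G] (M : Submonoid G)
    (hgen : Subgroup.closure (M : Set G) = ⊤)
    (hlcm : ∀ a ∈ M, ∀ b ∈ M, ∃ c, IsRightLcmIn M a b c)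
    (z : G) (p : ℕ) (hp : 0 < p) (hzp : z ^ p = 1)
    (x y : ℕ → G)
    (hx : ∀ i, 1 ≤ i → x i ∈ M) (hy : ∀ i, 1 ≤ i → y i ∈ M)
    (hz : z = x 1 * (y 1)⁻¹)
    (hrel : ∀ i, 1 ≤ i → x i * y (i + 1) = y i * x (i + 1))
    (hrell : ∀ i, 1 ≤ i → IsRightLcmIn M (x i) (y i) (x i * y (i + 1))) :
    (∃ u ∈ M, y (p + 1) * u = 1 ∧ u * y (p + 1) = 1) ∧
      x (p + 1) * (y (p + 1))⁻¹ ∈ M ∧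
      (x (p + 1) * (y (p + 1))⁻¹) ^ p = 1 ∧
      seqProd x 0 p ∈ M ∧
      z = seqProd x 0 p * (x (p + 1) * (y (p + 1))⁻¹) * (seqProd x 0 p)⁻¹ := by
  -- sliding an `x` through a block of `y`'s
  have hD : ∀ k j : ℕ, x (j+1) * seqProd y (j+1) k = seqProd y j k * x (j+1+k) := by
    intro k
    induction k with
    | zero => intro j; simp [seqProd_zero]
    | succ k ih =>
      intro j
      rw [seqProd_succ, seqProd_succ, ← mul_assoc, ih j, mul_assoc, mul_assoc]
      congr 1
      have h := hrel (j+1+k) (by omega)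
      rw [show j+1+1+k = j+1+k+1 from by omega, show j+1+(k+1) = j+1+k+1 from by omega]
      exact h
  -- z^k * (y₁⋯y_k) = x₁⋯x_k
  have hE : ∀ k, z ^ k * seqProd y 0 k = seqProd x 0 k := by
    intro k
    induction k with
    | zero => simp [seqProd_zero]
    | succ k ih =>
      have hstep := hD k 0
      simp only [Nat.zero_add] at hstep
      have hzy : z * y 1 = x 1 := by rw [hz]; group
      rw [seqProd_front]
      simp only [Nat.zero_add]
      rw [pow_succ, mul_assoc, ← mul_assoc z (y 1), hzy, hstep, ← mul_assoc, ih,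
        seqProd_succ]
  obtain ⟨q, rfl⟩ : ∃ q, p = q + 1 := ⟨p - 1, by omega⟩
  have hXY : seqProd y 0 (q+1) = seqProd x 0 (q+1) := by
    have h := hE (q+1)
    rwa [hzp, one_mul] at h
  -- main induction using the lcm property
  have hF : ∀ k, k ≤ q → ∃ m ∈ M, seqProd x k (q + 1 - k) = y (k+1) * m := by
    intro k
    induction k with
    | zero =>
      intro _
      refine ⟨seqProd y 1 q, seqProd_mem y hy 1 q, ?_⟩
      have h := hXY
      rw [seqProd_front] at h
      simp only [Nat.zero_add] at h ⊢
      exact h.symm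
    | succ k ih =>
      intro hk
      obtain ⟨m, hm, heq⟩ := ih (by omega)
      rw [show q + 1 - k = (q + 1 - (k+1)) + 1 from by omega, seqProd_front] at heq
      obtain ⟨c, hc, hwc⟩ := (hrell (k+1) (by omega)).2.2.2 _
        (M.mul_mem (hx _ (by omega)) (seqProd_mem x hx _ _))
        ⟨seqProd x (k+1) (q + 1 - (k+1)), seqProd_mem x hx _ _, rfl⟩ ⟨m, hm, heq⟩
      refine ⟨c, hc, ?_⟩
      rw [mul_assoc] at hwc
      exact mul_left_cancel hwc
  obtain ⟨m, hm, hFq⟩ := hF q le_rfl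
  rw [show q + 1 - q = 1 from by omega, seqProd_front, seqProd_zero, mul_one] at hFq
  obtain ⟨c, hc, hxc⟩ := (hrell (q+1) (by omega)).2.2.2 (x (q+1)) (hx _ (by omega))
    ⟨1, M.one_mem, (mul_one _).symm⟩ ⟨m, hm, hFq⟩
  have hyc : y (q+1+1) * c = 1 := by
    rw [mul_assoc] at hxc
    have h2 : x (q+1) * 1 = x (q+1) * (y (q+1+1) * c) := by rw [mul_one]; exact hxc
    exact (mul_left_cancel h2).symm
  have hinv : (y (q+1+1))⁻¹ = c := inv_eq_of_mul_eq_one_right hyc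
  have hcy : c * y (q+1+1) = 1 := by rw [← hinv]; simp
  -- conjugation identity
  have hG : ∀ k, z = seqProd x 0 k * (x (k+1) * (y (k+1))⁻¹) * (seqProd x 0 k)⁻¹ := by
    intro k
    induction k with
    | zero => simp [seqProd_zero, hz]
    | succ k ih =>
      have h := hrel (k+1) (by omega)
      have h2 : x (k+1+1) * (y (k+1+1))⁻¹ = (y (k+1))⁻¹ * x (k+1) := by
        rw [mul_inv_eq_iff_eq_mul, mul_assoc, h, ← mul_assoc, inv_mul_cancel, one_mul]
      rw [seqProd_succ, show (0:ℕ)+1+k = k+1 from by omega, h2, ih]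
      group
  have tmem : x (q+1+1) * (y (q+1+1))⁻¹ ∈ M := by
    rw [hinv]
    exact M.mul_mem (hx _ (by omega)) hc
  have tpow : (x (q+1+1) * (y (q+1+1))⁻¹) ^ (q+1) = 1 := by
    have ht : x (q+1+1) * (y (q+1+1))⁻¹ =
        (seqProd x 0 (q+1))⁻¹ * z * seqProd x 0 (q+1) := by
      rw [hG (q+1)]
      group
    rw [ht, show (seqProd x 0 (q+1))⁻¹ * z * seqProd x 0 (q+1) =
      (seqProd x 0 (q+1))⁻¹ * z * ((seqProd x 0 (q+1))⁻¹)⁻¹ from by rw [inv_inv],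
      conj_pow_aux, hzp]
    group
  exact ⟨⟨c, hc, hyc, hcy⟩, tmem, tpow, seqProd_mem x hx 0 (q+1), hG (q+1)⟩
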